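/- arXiv:2301.11330 — 2 statements merged into one kernel-verified Lean document; each statement's English description precedes it below -/
import Mathlib

section
/- Conservatism of the state-distribution safety monitor (Theorem 1, conditioning on the estimator output): Let (Ω, ℱ, P) be a probability space, S a finite type, X : Ω → S a measurable random variable (the true state), A a measurable event (the event that the system is safe), G : S → ℝ a function (the lookup table of verified safety lower bounds), and D : Ω → (S → ℝ) a measurable state-distribution estimator taking finitely many values, with (D ω) s ≥ 0 for all s and ∑_{s∈S} (D ω) s = 1 for every ω. Fix d : S → ℝ with P(D = d) > 0 and suppose: (calibration) for every s ∈ S, P({X = s} | {D = d}) = d s; (conditional independence of safety from the monitor given the true state) for every s ∈ S with P({X = s} ∩ {D = d}) > 0, P(A | {X = s} ∩ {D = d}) = P(A | {X = s}); and (model conservatism) for every s ∈ S with P({X = s}) > 0, P(A | {X = s}) ≥ G s. Then P(A | {D = d}) ≥ ∑_{s ∈ S} d s · G s; that is, the monitor's safety estimate ∑_s d s · G s underestimates the true conditional probability of safety. -/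
open ProbabilityTheory MeasureTheory

/-- Conservatism of the state-distribution safety monitor (conditioning on the
estimator output): if the estimator `D` is well-calibrated at a value `d` of positive
probability, safety `A` is conditionally independent of the estimator output given the
true state `X`, and the lookup table `G` lower-bounds the true conditional safety
probabilities, then `P(A | D = d) ≥ ∑ s, d s * G s`. -/
theorem monitor_conservative_given_estimator_output
    {Ω : Type*} [MeasurableSpace Ω] (P : Measure Ω) [IsProbabilityMeasure P]
    {S : Type*} [Fintype S] [MeasurableSpace S] [MeasurableSingletonClass S]
    (X : Ω → S) (hX : Measurable X)
    (A : Set Ω) (hA : MeasurableSet A)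
    (G : S → ℝ)
    (D : Ω → (S → ℝ)) (hD : Measurable D) (hDfin : (Set.range D).Finite)
    (hDnonneg : ∀ ω s, 0 ≤ D ω s) (hDsum : ∀ ω, ∑ s : S, D ω s = 1)
    (d : S → ℝ) (hdpos : 0 < P (D ⁻¹' {d}))
    (hcal : ∀ s : S, (P[X ⁻¹' {s} | D ⁻¹' {d}]).toReal = d s)
    (hindep : ∀ s : S, 0 < P (X ⁻¹' {s} ∩ D ⁻¹' {d}) →
      P[A | X ⁻¹' {s} ∩ D ⁻¹' {d}] = P[A | X ⁻¹' {s}])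
    (hcons : ∀ s : S, 0 < P (X ⁻¹' {s}) → (P[A | X ⁻¹' {s}]).toReal ≥ G s) :
    (P[A | D ⁻¹' {d}]).toReal ≥ ∑ s : S, d s * G s := by
  classical
  set B := D ⁻¹' {d} with hBdef
  have hBm : MeasurableSet B := hD (measurableSet_singleton d)
  have hPBne : P B ≠ 0 := hdpos.ne'
  have hPBfin : P B ≠ ⊤ := measure_ne_top P B
  set pB : ℝ := (P B).toReal with hpBdef
  have hpBpos : 0 < pB := ENNReal.toReal_pos hPBne hPBfin
  -- decompose P (B ∩ A) over states
  have hsplit : P (B ∩ A) = ∑ s : S, P (X ⁻¹' {s} ∩ B ∩ A) := by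
    have : B ∩ A = ⋃ s : S, (X ⁻¹' {s} ∩ B ∩ A) := by
      ext ω
      simp only [Set.mem_iUnion, Set.mem_inter_iff, Set.mem_preimage, Set.mem_singleton_iff]
      constructor
      · rintro ⟨hb, ha⟩; exact ⟨X ω, ⟨rfl, hb⟩, ha⟩
      · rintro ⟨s, ⟨_, hb⟩, ha⟩; exact ⟨hb, ha⟩
    rw [this, measure_iUnion, tsum_fintype]
    · intro i j hij
      refine Set.disjoint_left.mpr fun ω hωi hωj => hij ?_
      have h1 : X ω = i := hωi.1.1
      have h2 : X ω = j := hωj.1.1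
      rw [← h1, h2]
    · intro s
      exact ((hX (measurableSet_singleton s)).inter hBm).inter hA
  -- value of the conditional probability
  have hcond : (P[A | B]).toReal = (∑ s : S, (P (X ⁻¹' {s} ∩ B ∩ A)).toReal) / pB := by
    rw [cond_apply hBm, ENNReal.toReal_mul, ENNReal.toReal_inv, hsplit,
      ENNReal.toReal_sum (fun s _ => measure_ne_top _ _)]
    ring
  rw [hcond, Finset.sum_div]
  apply Finset.sum_le_sum
  intro s _
  by_cases hzero : P (X ⁻¹' {s} ∩ B) = 0
  · have h1 : P (X ⁻¹' {s} ∩ B ∩ A) = 0 :=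
      measure_mono_null Set.inter_subset_left hzero
    have hds : d s = 0 := by
      rw [← hcal s, cond_apply hBm, Set.inter_comm B (X ⁻¹' {s})] at *
      simp [hzero]
    rw [hds, h1]
    simp
  · have hCpos : 0 < P (X ⁻¹' {s} ∩ B) := pos_iff_ne_zero.mpr hzero
    set C := X ⁻¹' {s} ∩ B with hCdef
    have hCfin : P C ≠ ⊤ := measure_ne_top P C
    have hCm : MeasurableSet C := (hX (measurableSet_singleton s)).inter hBm
    set pC : ℝ := (P C).toReal with hpCdef
    have hpCpos : 0 < pC := ENNReal.toReal_pos hCpos.ne' hCfin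
    have hXpos : 0 < P (X ⁻¹' {s}) := lt_of_lt_of_le hCpos (measure_mono Set.inter_subset_left)
    -- d s = pC / pB
    have hds : d s = pC / pB := by
      rw [← hcal s, cond_apply hBm, Set.inter_comm B (X ⁻¹' {s}), ENNReal.toReal_mul,
        ENNReal.toReal_inv]
      rw [div_eq_inv_mul]
    -- P[A|C].toReal = (P (C ∩ A)).toReal / pC
    have hAC : (P[A | C]).toReal = (P (C ∩ A)).toReal / pC := by
      rw [cond_apply hCm, ENNReal.toReal_mul, ENNReal.toReal_inv, div_eq_inv_mul]
    have hge : (P (C ∩ A)).toReal / pC ≥ G s := by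
      rw [← hAC, hindep s hCpos]
      exact hcons s hXpos
    have hdnn : 0 ≤ d s := by rw [hds]; positivity
    calc d s * G s ≤ d s * ((P (C ∩ A)).toReal / pC) :=
          mul_le_mul_of_nonneg_left hge hdnn
      _ = (P (C ∩ A)).toReal / pB := by
          rw [hds]; field_simp
end

section
/- Conservatism of the state-distribution safety monitor conditioned on the monitor's reported value (Theorem 1, monitor-value form): Let (Ω, ℱ, P) be a probability space, S a finite type, X : Ω → S a measurable random variable (the true state), A a measurable event (the event that the system is safe), G : S → ℝ a function (the lookup table of verified safety lower bounds), and D : Ω → (S → ℝ) a measurable state-distribution estimator taking finitely many values, with (D ω) s ≥ 0 for all s and ∑_{s∈S} (D ω) s = 1 for every ω. Define the monitor output M : Ω → ℝ by M(ω) = ∑_{s∈S} (D ω) s · G s. Suppose that for every d in the range of D with P(D = d) > 0: (calibration) for every s ∈ S, P({X = s} | {D = d}) = d s; and (conditional independence) for every s ∈ S with P({X = s} ∩ {D = d}) > 0, P(A | {X = s} ∩ {D = d}) = P(A | {X = s}). Suppose also (model conservatism) that for every s ∈ S with P({X = s}) > 0, P(A | {X = s}) ≥ G s. Then for every p ∈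 ℝ with P(M = p) > 0, P(A | {M = p}) ≥ p. -/
/-!
On each level set `{D = d}` of positive probability, calibration gives
`P(X = s, D = d) = d s · P(D = d)`, and conditional independence plus conservatism give
`P(A | X = s, D = d) ≥ G s`; summing over `s` yields
`P(A ∩ {D = d}) ≥ (∑ s, d s · G s) · P(D = d)`. The event `{M = p}` is the finite disjoint union
of the level sets with `∑ s, d s · G s = p`, so summing once more gives
`P(A ∩ {M = p}) ≥ p · P(M = p)`.
-/

open ProbabilityTheory MeasureTheory

section ConditionalBounds

variable {Ω : Type*} [MeasurableSpace Ω] {μ : Measure Ω} [IsFiniteMeasure μ] {A E : Set Ω}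

theorem cond_toReal_mul_measureReal (hE : MeasurableSet E) :
    (μ[A | E]).toReal * μ.real E = μ.real (E ∩ A) := by
  rw [measureReal_def, measureReal_def, ← ENNReal.toReal_mul, cond_mul_eq_inter hE]

theorem le_cond_toReal_iff (hE : MeasurableSet E) (hpos : 0 < μ E) {c : ℝ} :
    c ≤ (μ[A | E]).toReal ↔ c * μ.real E ≤ μ.real (E ∩ A) := by
  rw [← cond_toReal_mul_measureReal hE, mul_le_mul_iff_of_pos_right
    (show 0 < μ.real E from ENNReal.toReal_pos hpos.ne' (measure_ne_top μ E))]

theorem mul_measureReal_le_of_le_cond (hE : MeasurableSet E) {c : ℝ}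
    (h : 0 < μ E → c ≤ (μ[A | E]).toReal) : c * μ.real E ≤ μ.real (E ∩ A) := by
  rcases eq_zero_or_pos (μ E) with hnull | hpos
  · rw [measureReal_def, hnull, ENNReal.toReal_zero, mul_zero]
    exact measureReal_nonneg
  · exact (le_cond_toReal_iff hE hpos).1 (h hpos)

theorem sum_mul_measureReal_le_measureReal_biUnion_inter {ι : Type*} {T : Finset ι}
    {F : ι → Set Ω} (hF : ∀ i ∈ T, MeasurableSet (F i))
    (hdisj : (T : Set ι).PairwiseDisjoint F) (hA : MeasurableSet A) {c : ι → ℝ}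
    (h : ∀ i ∈ T, c i * μ.real (F i) ≤ μ.real (F i ∩ A)) :
    ∑ i ∈ T, c i * μ.real (F i) ≤ μ.real ((⋃ i ∈ T, F i) ∩ A) := by
  rw [Set.iUnion₂_inter, measureReal_biUnion_finset
    (hdisj.mono fun _ => Set.inter_subset_left) fun i hi => (hF i hi).inter hA]
  exact Finset.sum_le_sum h

theorem sum_mul_mul_measureReal_le_measureReal_inter {S : Type*} [Fintype S] [MeasurableSpace S]
    [MeasurableSingletonClass S] {X : Ω → S} (hX : Measurable X) (hA : MeasurableSet A)
    (hE : MeasurableSet E) {G w : S → ℝ} (hw : ∀ s, (μ[X ⁻¹' {s} | E]).toReal = w s)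
    (hindep : ∀ s, 0 < μ (X ⁻¹' {s} ∩ E) → μ[A | X ⁻¹' {s} ∩ E] = μ[A | X ⁻¹' {s}])
    (hcons : ∀ s, 0 < μ (X ⁻¹' {s}) → G s ≤ (μ[A | X ⁻¹' {s}]).toReal) :
    (∑ s, w s * G s) * μ.real E ≤ μ.real (E ∩ A) := by
  have hfiber : ∀ s, MeasurableSet (X ⁻¹' {s} ∩ E) := fun s =>
    (hX (measurableSet_singleton s)).inter hE
  calc (∑ s, w s * G s) * μ.real E = ∑ s, G s * μ.real (X ⁻¹' {s} ∩ E) := by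
        rw [Finset.sum_mul]
        refine Finset.sum_congr rfl fun s _ => ?_
        rw [← hw, mul_right_comm, cond_toReal_mul_measureReal hE, Set.inter_comm, mul_comm]
    _ ≤ μ.real ((⋃ s ∈ Finset.univ, X ⁻¹' {s} ∩ E) ∩ A) := by
        refine sum_mul_measureReal_le_measureReal_biUnion_inter (fun s _ => hfiber s)
          ((Set.pairwiseDisjoint_fiber X _).mono fun _ => Set.inter_subset_left) hA
          fun s _ => mul_measureReal_le_of_le_cond (hfiber s) fun hpos => ?_
        rw [hindep s hpos]
        exact hcons s (hpos.trans_le (measure_mono Set.inter_subset_left))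
    _ = μ.real (E ∩ A) := by
        simp only [Finset.mem_univ, Set.iUnion_true, ← Set.iUnion_inter,
          ← Set.preimage_iUnion, Set.iUnion_of_singleton, Set.preimage_univ, Set.univ_inter]

end ConditionalBounds

theorem monitor_conservative_given_monitor_value_general
    {Ω : Type*} [MeasurableSpace Ω] (P : Measure Ω) [IsProbabilityMeasure P]
    {S : Type*} [Fintype S] [MeasurableSpace S] [MeasurableSingletonClass S]
    (X : Ω → S) (hX : Measurable X)
    (A : Set Ω) (hA : MeasurableSet A)
    (G : S → ℝ)
    (D : Ω → (S → ℝ)) (hD : Measurable D) (hDfin : (Set.range D).Finite)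
    (M : Ω → ℝ) (hM : ∀ ω, M ω = ∑ s : S, D ω s * G s)
    (hcal : ∀ d ∈ Set.range D, 0 < P (D ⁻¹' {d}) →
      ∀ s : S, (P[X ⁻¹' {s} | D ⁻¹' {d}]).toReal = d s)
    (hindep : ∀ d ∈ Set.range D, 0 < P (D ⁻¹' {d}) →
      ∀ s : S, 0 < P (X ⁻¹' {s} ∩ D ⁻¹' {d}) →
        P[A | X ⁻¹' {s} ∩ D ⁻¹' {d}] = P[A | X ⁻¹' {s}])
    (hcons : ∀ s : S, 0 < P (X ⁻¹' {s}) → (P[A | X ⁻¹' {s}]).toReal ≥ G s) :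
    ∀ p : ℝ, 0 < P (M ⁻¹' {p}) → (P[A | M ⁻¹' {p}]).toReal ≥ p := by
  intro p hp
  have hfiber : ∀ d, MeasurableSet (D ⁻¹' {d}) := fun d => hD (measurableSet_singleton d)
  set T := hDfin.toFinset.filter fun d => ∑ s, d s * G s = p
  have hlevel : M ⁻¹' {p} = ⋃ d ∈ T, D ⁻¹' {d} := by
    ext ω
    simp [T, hM]
  have hbound : ∀ d ∈ T, p * P.real (D ⁻¹' {d}) ≤ P.real (D ⁻¹' {d} ∩ A) := by
    intro d hd
    obtain ⟨hmem, rfl⟩ := Finset.mem_filter.1 hd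
    rcases eq_zero_or_pos (P (D ⁻¹' {d})) with hnull | hpos
    · exact mul_measureReal_le_of_le_cond (hfiber d) fun h => (h.ne' hnull).elim
    · have hrange := hDfin.mem_toFinset.1 hmem
      exact sum_mul_mul_measureReal_le_measureReal_inter hX hA (hfiber d)
        (hcal d hrange hpos) (hindep d hrange hpos) hcons
  have hmeas : MeasurableSet (M ⁻¹' {p}) :=
    hlevel ▸ T.measurableSet_biUnion fun d _ => hfiber d
  refine (le_cond_toReal_iff hmeas hp).2 ?_
  calc p * P.real (M ⁻¹' {p}) = ∑ d ∈ T, p * P.real (D ⁻¹' {d}) := by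
        rw [hlevel, measureReal_biUnion_finset (Set.pairwiseDisjoint_fiber D _)
          fun d _ => hfiber d, Finset.mul_sum]
    _ ≤ P.real (M ⁻¹' {p} ∩ A) := hlevel ▸ sum_mul_measureReal_le_measureReal_biUnion_inter
        (fun d _ => hfiber d) (Set.pairwiseDisjoint_fiber D _) hA hbound

/-- Conservatism of the state-distribution safety monitor conditioned on the monitor's
reported value: with monitor output `M ω = ∑ s, (D ω) s * G s`, if `D` is well-calibrated
at every value of positive probability, safety `A` is conditionally independent of the
estimator output given the true state `X`, and the lookup table `G` lower-bounds the
true conditional safety probabilities, then `P(A | M = p) ≥ p` whenever `P(M = p) > 0`. -/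
theorem monitor_conservative_given_monitor_value
    {Ω : Type*} [MeasurableSpace Ω] (P : Measure Ω) [IsProbabilityMeasure P]
    {S : Type*} [Fintype S] [MeasurableSpace S] [MeasurableSingletonClass S]
    (X : Ω → S) (hX : Measurable X)
    (A : Set Ω) (hA : MeasurableSet A)
    (G : S → ℝ)
    (D : Ω → (S → ℝ)) (hD : Measurable D) (hDfin : (Set.range D).Finite)
    (hDnonneg : ∀ ω s, 0 ≤ D ω s) (hDsum : ∀ ω, ∑ s : S, D ω s = 1)
    (M : Ω → ℝ) (hM : ∀ ω, M ω = ∑ s : S, D ω s * G s)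
    (hcal : ∀ d ∈ Set.range D, 0 < P (D ⁻¹' {d}) →
      ∀ s : S, (P[X ⁻¹' {s} | D ⁻¹' {d}]).toReal = d s)
    (hindep : ∀ d ∈ Set.range D, 0 < P (D ⁻¹' {d}) →
      ∀ s : S, 0 < P (X ⁻¹' {s} ∩ D ⁻¹' {d}) →
        P[A | X ⁻¹' {s} ∩ D ⁻¹' {d}] = P[A | X ⁻¹' {s}])
    (hcons : ∀ s : S, 0 < P (X ⁻¹' {s}) → (P[A | X ⁻¹' {s}]).toReal ≥ G s) :
    ∀ p : ℝ, 0 < P (M ⁻¹' {p}) → (P[A | M ⁻¹' {p}]).toReal ≥ p :=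
  monitor_conservative_given_monitor_value_general P X hX A hA G D hD hDfin M hM hcal hindep hcons
end
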